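/- Let ℬ be a building set on [d] that is △-closed. Then for any i, j, k ∈ [d] and any K ∈ N_{i,j}^k(ℬ), the map J ↦ J △ K is a bijection from N_{i,k}^j(ℬ) to N_{j,k}^i(ℬ). In particular, if N_{i,j}^k(ℬ) and N_{j,k}^i(ℬ) are both nonempty, then |N_{i,j}^k(ℬ)| = |N_{j,k}^i(ℬ)| = |N_{i,k}^j(ℬ)|. -/

import Mathlib

/-!
If `K` contains `i, j` but not `k`, and `J` contains `i, k` but not `j`, then `J` and `K` overlap
(in `i`) without being nested (`k ∈ J \ K`, `j ∈ K \ J`), so `△`-closedness puts `J △ K` in `ℬ`;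
it contains `j, k` but not `i`. The same argument with `i, j` swapped maps back, and `· △ K` is an
involution, so it is a bijection. Given also `M ∈ N_{j,k}^i`, the map `· △ M` identifies
`N_{i,j}^k` with `N_{i,k}^j` in the same way.
-/

namespace Finset

variable {α : Type*} [DecidableEq α]

def IsSymmDiffClosed (B : Finset (Finset α)) : Prop :=
  ∀ I ∈ B, ∀ J ∈ B, ¬ I ⊆ J → ¬ J ⊆ I → (I ∩ J).Nonempty → symmDiff I J ∈ B

/-- The family `N_{a,b}^c(B)`. -/
def throughAvoiding (B : Finset (Finset α)) (a b c : α) : Finset (Finset α) :=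
  B.filter fun I => a ∈ I ∧ b ∈ I ∧ c ∉ I

variable {B : Finset (Finset α)} {a b c : α} {K : Finset α}

theorem mem_throughAvoiding :
    K ∈ throughAvoiding B a b c ↔ K ∈ B ∧ a ∈ K ∧ b ∈ K ∧ c ∉ K := by
  simp only [throughAvoiding, mem_filter]

theorem throughAvoiding_comm (B : Finset (Finset α)) (a b c : α) :
    throughAvoiding B a b c = throughAvoiding B b a c := by
  ext K
  simp only [mem_throughAvoiding, and_left_comm]

theorem IsSymmDiffClosed.mapsTo_symmDiff_throughAvoiding (hB : IsSymmDiffClosed B)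
    (hK : K ∈ throughAvoiding B a b c) :
    Set.MapsTo (fun J => symmDiff J K) ↑(throughAvoiding B a c b) ↑(throughAvoiding B b c a) := by
  intro J hJ
  rw [mem_coe, mem_throughAvoiding] at hJ ⊢
  rw [mem_throughAvoiding] at hK
  obtain ⟨hJB, haJ, hcJ, hbJ⟩ := hJ
  obtain ⟨hKB, haK, hbK, hcK⟩ := hK
  have hJK : symmDiff J K ∈ B :=
    hB J hJB K hKB (fun h => hcK (h hcJ)) (fun h => hbJ (h hbK)) ⟨a, mem_inter.2 ⟨haJ, haK⟩⟩
  refine ⟨hJK, ?_, ?_, ?_⟩ <;> simp [mem_symmDiff, *]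

theorem IsSymmDiffClosed.bijOn_symmDiff_throughAvoiding (hB : IsSymmDiffClosed B)
    (hK : K ∈ throughAvoiding B a b c) :
    Set.BijOn (fun J => symmDiff J K) ↑(throughAvoiding B a c b) ↑(throughAvoiding B b c a) := by
  have hK' : K ∈ throughAvoiding B b a c := throughAvoiding_comm B a b c ▸ hK
  have hinv : Set.InvOn (fun J => symmDiff J K) (fun J => symmDiff J K)
      ↑(throughAvoiding B a c b) ↑(throughAvoiding B b c a) :=
    ⟨fun J _ => symmDiff_symmDiff_cancel_right K J, fun J _ => symmDiff_symmDiff_cancel_right K J⟩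
  exact hinv.bijOn (hB.mapsTo_symmDiff_throughAvoiding hK) (hB.mapsTo_symmDiff_throughAvoiding hK')

theorem IsSymmDiffClosed.card_throughAvoiding_eq (hB : IsSymmDiffClosed B)
    (hK : (throughAvoiding B a b c).Nonempty) :
    (throughAvoiding B a c b).card = (throughAvoiding B b c a).card := by
  obtain ⟨K, hK⟩ := hK
  have hbij := hB.bijOn_symmDiff_throughAvoiding hK
  exact card_nbij _ hbij.mapsTo hbij.injOn hbij.surjOn

end Finset

open Finset in
theorem stmt17_general (d : ℕ) (B : Finset (Finset (Fin d)))
    (htriangle : ∀ I ∈ B, ∀ J ∈ B, ¬ I ⊆ J → ¬ J ⊆ I → (I ∩ J).Nonempty →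
      symmDiff I J ∈ B)
    (i j k : Fin d)
    (N : Fin d → Fin d → Fin d → Finset (Finset (Fin d)))
    (hN : ∀ a b c, N a b c = B.filter (fun I => a ∈ I ∧ b ∈ I ∧ c ∉ I)) :
    (∀ K ∈ N i j k,
      Set.BijOn (fun J => symmDiff J K) ↑(N i k j) ↑(N j k i)) ∧
    ((N i j k).Nonempty → (N j k i).Nonempty →
      (N i j k).card = (N j k i).card ∧ (N j k i).card = (N i k j).card) := by
  have hB : IsSymmDiffClosed B := htriangle
  have hN' : N = throughAvoiding B := funext₃ hN
  subst hN'
  refine ⟨fun K hK => hB.bijOn_symmDiff_throughAvoiding hK, fun hijk hjki => ?_⟩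
  have h₁ := hB.card_throughAvoiding_eq hijk
  have h₂ := hB.card_throughAvoiding_eq hjki
  rw [throughAvoiding_comm B j i k, throughAvoiding_comm B k i j] at h₂
  omega

/-- For a `△`-closed building set `ℬ` on `[d]` and distinct `i j k`, for any
`K ∈ N_{i,j}^k(ℬ)` the map `J ↦ J △ K` is a bijection from `N_{i,k}^j(ℬ)` to
`N_{j,k}^i(ℬ)`; hence if `N_{i,j}^k` and `N_{j,k}^i` are nonempty then all three
sets `N_{i,j}^k, N_{j,k}^i, N_{i,k}^j` have the same cardinality. -/
theorem stmt17 (d : ℕ) (B : Finset (Finset (Fin d)))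
    (hne : ∀ I ∈ B, I.Nonempty)
    (hbuild : ∀ I ∈ B, ∀ J ∈ B, (I ∩ J).Nonempty → I ∪ J ∈ B)
    (htriangle : ∀ I ∈ B, ∀ J ∈ B, ¬ I ⊆ J → ¬ J ⊆ I → (I ∩ J).Nonempty →
      symmDiff I J ∈ B)
    (i j k : Fin d) (hij : i ≠ j) (hjk : j ≠ k) (hik : i ≠ k)
    (N : Fin d → Fin d → Fin d → Finset (Finset (Fin d)))
    (hN : ∀ a b c, N a b c = B.filter (fun I => a ∈ I ∧ b ∈ I ∧ c ∉ I)) :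
    (∀ K ∈ N i j k,
      Set.BijOn (fun J => symmDiff J K) ↑(N i k j) ↑(N j k i)) ∧
    ((N i j k).Nonempty → (N j k i).Nonempty →
      (N i j k).card = (N j k i).card ∧ (N j k i).card = (N i k j).card) :=
  stmt17_general d B htriangle i j k N hN
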